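/- There is a universal constant C such that for all f ∈ L²(ℝ,ℂ), g ∈ L²(ℝ,ℂ) and λ ∈ ℂ with Im λ² > 0, the operator norm of T_f(λ)T_g(λ) on L²(ℝ,ℂ²) satisfies ‖T_f(λ)T_g(λ)‖² ≤ C (|λ|⁴/(Im λ²)²) ∫_{ℝ²} e^{−2 Im(λ²)|x−y|} |f(x)|² |g(y)|² dx dy. -/

import Mathlib

open MeasureTheory Complex

/-- First component of `T_u(λ) f` for `T_u(λ) = iλ(𝓛₀ − λ²)⁻¹U_u`, via the explicit
kernel of the free resolvent of `𝓛₀ = iσ₃∂ₓ`. -/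
noncomputable def Tcomp₁ (u : ℝ → ℂ) (lam : ℂ) (f₂ : ℝ → ℂ) (x : ℝ) : ℂ :=
  Complex.I * lam * ∫ y : ℝ,
    (if x < y then Complex.I * Complex.exp (-Complex.I * lam ^ 2 * ((x : ℂ) - y)) else 0) *
      u y * f₂ y

/-- Second component of `T_u(λ) f`. -/
noncomputable def Tcomp₂ (u : ℝ → ℂ) (lam : ℂ) (f₁ : ℝ → ℂ) (x : ℝ) : ℂ :=
  Complex.I * lam * ∫ y : ℝ,
    (if y < x then Complex.I * Complex.exp (Complex.I * lam ^ 2 * ((x : ℂ) - y)) else 0) *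
      (starRingEnd ℂ) (u y) * f₁ y

/-!
Both resolvent kernels are bounded in modulus by the symmetric kernel `e^{-a|x-y|}`,
`a = Im λ²`, whose rows and columns have mass `2/a`. Cauchy–Schwarz bounds the inner factor
pointwise, `|T_g h(y)|² ≤ |λ|² (∫ e^{-2a|y-z|}|g(z)|² dz) ‖h‖²`, and Schur's test bounds the outer
factor on `L²`, `‖T_f φ‖² ≤ |λ|² (2/a)² ‖f φ‖²`. Combining the two gives the claim with `C = 4`.
-/

open Set Function
open scoped ENNReal

lemma ENNReal.rpow_two_inv_pow_two (b : ℝ≥0∞) : (b ^ (2⁻¹ : ℝ)) ^ 2 = b := by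
  rw [← ENNReal.rpow_natCast, ← ENNReal.rpow_mul]; norm_num

section KernelBounds

variable {α : Type*} [MeasurableSpace α] {μ : Measure α}

theorem sq_lintegral_mul_le {f g : α → ℝ≥0∞} (hf : AEMeasurable f μ) (hg : AEMeasurable g μ) :
    (∫⁻ x, f x * g x ∂μ) ^ 2 ≤ (∫⁻ x, f x ^ 2 ∂μ) * ∫⁻ x, g x ^ 2 ∂μ := by
  have h := pow_le_pow_left' (ENNReal.lintegral_mul_le_Lp_mul_Lq μ .two_two hf hg) 2
  simpa only [mul_pow, one_div, ENNReal.rpow_two_inv_pow_two, ENNReal.rpow_two, Pi.mul_apply]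
    using h

theorem sq_le_of_le_mul_lintegral_mul {k G H : α → ℝ≥0∞} (hk : AEMeasurable k μ)
    (hG : AEMeasurable G μ) (hH : AEMeasurable H μ) {Φ c : ℝ≥0∞}
    (hΦ : Φ ≤ c * ∫⁻ z, k z * G z * H z ∂μ) :
    Φ ^ 2 ≤ c ^ 2 * (∫⁻ z, k z ^ 2 * G z ^ 2 ∂μ) * ∫⁻ z, H z ^ 2 ∂μ := calc
  Φ ^ 2 ≤ c ^ 2 * (∫⁻ z, k z * G z * H z ∂μ) ^ 2 := by
    rw [← mul_pow]; exact pow_le_pow_left' hΦ 2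
  _ ≤ c ^ 2 * (∫⁻ z, k z ^ 2 * G z ^ 2 ∂μ) * ∫⁻ z, H z ^ 2 ∂μ := by
    rw [mul_assoc]
    gcongr
    simpa only [mul_pow, Pi.mul_apply] using sq_lintegral_mul_le (hk.mul hG) hH

theorem sq_lintegral_mul_le_lintegral_mul_lintegral_mul_sq {k ψ : α → ℝ≥0∞}
    (hk : AEMeasurable k μ) (hψ : AEMeasurable ψ μ) :
    (∫⁻ x, k x * ψ x ∂μ) ^ 2 ≤ (∫⁻ x, k x ∂μ) * ∫⁻ x, k x * ψ x ^ 2 ∂μ := by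
  have hk' : AEMeasurable (fun x => k x ^ (2⁻¹ : ℝ)) μ := hk.pow_const _
  calc (∫⁻ x, k x * ψ x ∂μ) ^ 2
      = (∫⁻ x, k x ^ (2⁻¹ : ℝ) * (k x ^ (2⁻¹ : ℝ) * ψ x) ∂μ) ^ 2 := by
        simp_rw [← mul_assoc, ← sq, ENNReal.rpow_two_inv_pow_two]
    _ ≤ (∫⁻ x, (k x ^ (2⁻¹ : ℝ)) ^ 2 ∂μ) * ∫⁻ x, (k x ^ (2⁻¹ : ℝ) * ψ x) ^ 2 ∂μ :=
        sq_lintegral_mul_le hk' (hk'.mul hψ)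
    _ = (∫⁻ x, k x ∂μ) * ∫⁻ x, k x * ψ x ^ 2 ∂μ := by
        simp_rw [mul_pow, ENNReal.rpow_two_inv_pow_two]

variable [SFinite μ] {K : α → α → ℝ≥0∞}

theorem AEMeasurable.lintegral_kernel_mul (hK : Measurable (uncurry K)) {ψ : α → ℝ≥0∞}
    (hψ : AEMeasurable ψ μ) : AEMeasurable (fun x => ∫⁻ y, K x y * ψ y ∂μ) μ :=
  (hK.aemeasurable.mul hψ.comp_snd).lintegral_prod_right'

theorem lintegral_sq_lintegral_kernel_mul_le (hK : Measurable (uncurry K)) {A B : ℝ≥0∞}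
    (hrow : ∀ x, ∫⁻ y, K x y ∂μ ≤ A) (hcol : ∀ y, ∫⁻ x, K x y ∂μ ≤ B) {ψ : α → ℝ≥0∞}
    (hψ : AEMeasurable ψ μ) :
    ∫⁻ x, (∫⁻ y, K x y * ψ y ∂μ) ^ 2 ∂μ ≤ A * B * ∫⁻ y, ψ y ^ 2 ∂μ := by
  have hKx : ∀ x, Measurable (K x) := fun x => hK.comp measurable_prodMk_left
  calc ∫⁻ x, (∫⁻ y, K x y * ψ y ∂μ) ^ 2 ∂μ
      ≤ ∫⁻ x, A * ∫⁻ y, K x y * ψ y ^ 2 ∂μ ∂μ := lintegral_mono fun x =>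
        (sq_lintegral_mul_le_lintegral_mul_lintegral_mul_sq (hKx x).aemeasurable hψ).trans
          (mul_le_mul_left (hrow x) _)
    _ = A * ∫⁻ y, (∫⁻ x, K x y ∂μ) * ψ y ^ 2 ∂μ := by
        rw [lintegral_const_mul'' _ (.lintegral_kernel_mul hK (hψ.pow_const 2)),
          lintegral_lintegral_swap (hK.aemeasurable.mul (hψ.pow_const 2).comp_snd)]
        exact congrArg _ (lintegral_congr fun y =>
          lintegral_mul_const _ (hK.comp measurable_prodMk_right))
    _ ≤ A * ∫⁻ y, B * ψ y ^ 2 ∂μ := by gcongr with y; exact hcol y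
    _ = A * B * ∫⁻ y, ψ y ^ 2 ∂μ := by rw [lintegral_const_mul'' _ (hψ.pow_const 2), mul_assoc]

theorem lintegral_sq_le_of_iterated_kernel_bounds (hK : Measurable (uncurry K))
    {A B c : ℝ≥0∞} (hc : c ≠ ∞) (hrow : ∀ x, ∫⁻ y, K x y ∂μ ≤ A)
    (hcol : ∀ y, ∫⁻ x, K x y ∂μ ≤ B) {F G H Φ T : α → ℝ≥0∞} (hF : AEMeasurable F μ)
    (hG : AEMeasurable G μ) (hH : AEMeasurable H μ) (hΦ : AEMeasurable Φ μ)
    (hΦle : ∀ y, Φ y ≤ c * ∫⁻ z, K y z * G z * H z ∂μ)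
    (hTle : ∀ x, T x ≤ c * ∫⁻ y, K x y * F y * Φ y ∂μ) :
    ∫⁻ x, T x ^ 2 ∂μ ≤
      c ^ 4 * (A * B) * (∫⁻ x, ∫⁻ y, K x y ^ 2 * F x ^ 2 * G y ^ 2 ∂μ ∂μ) * ∫⁻ z, H z ^ 2 ∂μ := by
  set N := ∫⁻ z, H z ^ 2 ∂μ
  have hKx : ∀ x, Measurable (K x) := fun x => hK.comp measurable_prodMk_left
  have hFKG : AEMeasurable (fun y => F y ^ 2 * ∫⁻ z, K y z ^ 2 * G z ^ 2 ∂μ) μ :=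
    (hF.pow_const 2).mul (.lintegral_kernel_mul (hK.pow_const 2) (hG.pow_const 2))
  have hΦsq (y : α) : Φ y ^ 2 ≤ c ^ 2 * (∫⁻ z, K y z ^ 2 * G z ^ 2 ∂μ) * N :=
    sq_le_of_le_mul_lintegral_mul (hKx y).aemeasurable hG hH (hΦle y)
  calc ∫⁻ x, T x ^ 2 ∂μ
      ≤ ∫⁻ x, c ^ 2 * (∫⁻ y, K x y * (F y * Φ y) ∂μ) ^ 2 ∂μ := lintegral_mono fun x => by
        simp_rw [← mul_assoc, ← mul_pow]; exact pow_le_pow_left' (hTle x) 2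
    _ = c ^ 2 * ∫⁻ x, (∫⁻ y, K x y * (F y * Φ y) ∂μ) ^ 2 ∂μ :=
        lintegral_const_mul' _ _ (ENNReal.pow_ne_top hc)
    _ ≤ c ^ 2 * (A * B * ∫⁻ y, (F y * Φ y) ^ 2 ∂μ) := by
        gcongr; exact lintegral_sq_lintegral_kernel_mul_le hK hrow hcol (hF.mul hΦ)
    _ ≤ c ^ 2 * (A * B * ∫⁻ y, F y ^ 2 * (∫⁻ z, K y z ^ 2 * G z ^ 2 ∂μ) * (c ^ 2 * N) ∂μ) := by
        gcongr with y
        calc (F y * Φ y) ^ 2 ≤ F y ^ 2 * (c ^ 2 * (∫⁻ z, K y z ^ 2 * G z ^ 2 ∂μ) * N) := by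
              rw [mul_pow]; gcongr; exact hΦsq y
          _ = _ := by ring
    _ = c ^ 2 * (A * B * ((∫⁻ y, F y ^ 2 * ∫⁻ z, K y z ^ 2 * G z ^ 2 ∂μ ∂μ) * (c ^ 2 * N))) := by
        rw [lintegral_mul_const'' _ hFKG]
    _ = c ^ 4 * (A * B) * (∫⁻ x, ∫⁻ y, K x y ^ 2 * F x ^ 2 * G y ^ 2 ∂μ ∂μ) * N := by
        have hinner : ∀ y, F y ^ 2 * ∫⁻ z, K y z ^ 2 * G z ^ 2 ∂μ =
            ∫⁻ z, K y z ^ 2 * F y ^ 2 * G z ^ 2 ∂μ := fun y => by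
          rw [← lintegral_const_mul'' (f := fun z => K y z ^ 2 * G z ^ 2) _
            (((hKx y).pow_const 2).aemeasurable.mul (hG.pow_const 2))]
          congr with z; ring
        simp_rw [hinner]
        ring

end KernelBounds

section RealIntegrals

variable {α β : Type*} [MeasurableSpace α] [MeasurableSpace β] {μ : Measure α} {ν : Measure β}

theorem MeasureTheory.MemLp.lintegral_enorm_sq_ne_top {E : Type*} [NormedAddCommGroup E]
    {f : α → E} (hf : MemLp f 2 μ) : ∫⁻ x, ‖f x‖ₑ ^ 2 ∂μ ≠ ∞ := by
  simpa using (lintegral_rpow_enorm_lt_top_of_eLpNorm_lt_top two_ne_zero ENNReal.ofNat_ne_top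
    hf.eLpNorm_lt_top).ne

theorem integral_norm_sq_add_norm_sq {E : Type*} [NormedAddCommGroup E] {u v : α → E}
    (hu : AEStronglyMeasurable u μ) (hv : AEStronglyMeasurable v μ) :
    ∫ x, (‖u x‖ ^ 2 + ‖v x‖ ^ 2) ∂μ = (∫⁻ x, ‖u x‖ₑ ^ 2 ∂μ + ∫⁻ x, ‖v x‖ₑ ^ 2 ∂μ).toReal := by
  rw [integral_eq_lintegral_of_nonneg_ae (f := fun x => ‖u x‖ ^ 2 + ‖v x‖ ^ 2)
    (.of_forall fun x => by positivity)
    ((hu.norm.pow 2).add (hv.norm.pow 2)), ← lintegral_add_left' (hu.enorm.pow_const 2)]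
  congr 1
  refine lintegral_congr fun x => ?_
  rw [ENNReal.ofReal_add (by positivity) (by positivity), ENNReal.ofReal_pow (norm_nonneg _),
    ENNReal.ofReal_pow (norm_nonneg _), ofReal_norm, ofReal_norm]

theorem integral_integral_eq_toReal_lintegral_lintegral [SFinite ν] {F : α → β → ℝ}
    (hF0 : ∀ x y, 0 ≤ F x y) (hF : AEStronglyMeasurable (uncurry F) (μ.prod ν))
    (hfin : ∫⁻ x, ∫⁻ y, ENNReal.ofReal (F x y) ∂ν ∂μ ≠ ∞) :
    ∫ x, ∫ y, F x y ∂ν ∂μ = (∫⁻ x, ∫⁻ y, ENNReal.ofReal (F x y) ∂ν ∂μ).toReal := by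
  have hmeas : AEMeasurable (fun x => ∫⁻ y, ENNReal.ofReal (F x y) ∂ν) μ :=
    hF.aemeasurable.ennreal_ofReal.lintegral_prod_right'
  rw [← integral_toReal hmeas (ae_lt_top' hmeas hfin)]
  refine integral_congr_ae (hF.prodMk_left.mono fun x hx => ?_)
  exact integral_eq_lintegral_of_nonneg_ae (.of_forall (hF0 x)) hx

end RealIntegrals

noncomputable def expKernel (a x y : ℝ) : ℝ≥0∞ := ENNReal.ofReal (Real.exp (-(a * |x - y|)))

lemma measurable_expKernel (a : ℝ) : Measurable (uncurry (expKernel a)) := by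
  unfold expKernel uncurry; fun_prop

lemma expKernel_comm (a x y : ℝ) : expKernel a x y = expKernel a y x := by
  rw [expKernel, expKernel, abs_sub_comm]

lemma expKernel_sq (a x y : ℝ) : expKernel a x y ^ 2 = expKernel (2 * a) x y := by
  rw [expKernel, expKernel, ← ENNReal.ofReal_pow (Real.exp_nonneg _), ← Real.exp_nat_mul]
  ring_nf

lemma expKernel_le_one {a : ℝ} (ha : 0 ≤ a) (x y : ℝ) : expKernel a x y ≤ 1 :=
  ENNReal.ofReal_le_one.mpr (Real.exp_le_one_iff.mpr (by simp only [neg_nonpos]; positivity))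

lemma lintegral_exp_neg_mul_abs {a : ℝ} (ha : 0 < a) :
    ∫⁻ t, ENNReal.ofReal (Real.exp (-(a * |t|))) = ENNReal.ofReal (2 / a) := by
  have hIoi : ∫⁻ t in Ioi 0, ENNReal.ofReal (Real.exp (-(a * |t|))) = ENNReal.ofReal (1 / a) := by
    rw [setLIntegral_congr_fun measurableSet_Ioi (g := fun t => ENNReal.ofReal (Real.exp (-a * t)))
      (fun t ht => by simp only [abs_of_pos (mem_Ioi.mp ht), neg_mul]),
      ← ofReal_integral_eq_lintegral_ofReal (integrableOn_exp_mul_Ioi (by linarith) 0)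
        (Filter.Eventually.of_forall fun _ => Real.exp_nonneg _),
      integral_exp_mul_Ioi (by linarith)]
    norm_num
  have hIic : ∫⁻ t in Iic 0, ENNReal.ofReal (Real.exp (-(a * |t|))) = ENNReal.ofReal (1 / a) := by
    rw [setLIntegral_congr_fun measurableSet_Iic (g := fun t => ENNReal.ofReal (Real.exp (a * t)))
      (fun t ht => by rw [abs_of_nonpos ht]; ring_nf),
      ← ofReal_integral_eq_lintegral_ofReal (integrableOn_exp_mul_Iic ha 0)
        (Filter.Eventually.of_forall fun _ => Real.exp_nonneg _),
      integral_exp_mul_Iic ha]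
    simp
  rw [← lintegral_add_compl _ measurableSet_Ioi, compl_Ioi, hIoi, hIic,
    ← ENNReal.ofReal_add (by positivity) (by positivity)]
  ring_nf

lemma lintegral_expKernel {a : ℝ} (ha : 0 < a) (x : ℝ) :
    ∫⁻ y, expKernel a x y = ENNReal.ofReal (2 / a) := by
  simp_rw [expKernel, abs_sub_comm x]
  exact (lintegral_sub_right_eq_self (fun t => ENNReal.ofReal (Real.exp (-(a * |t|)))) x).trans
    (lintegral_exp_neg_mul_abs ha)

lemma Complex.enorm_I : ‖I‖ₑ = 1 := by simp [← ofReal_norm]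

lemma norm_cexp_I_mul_sub (w : ℂ) (s t : ℝ) :
    ‖cexp (I * w * ((s : ℂ) - t))‖ = Real.exp (-(w.im * (s - t))) := by
  rw [Complex.norm_exp, ← ofReal_sub]
  simp [mul_re]

lemma enorm_ite_I_mul_cexp_le (w : ℂ) (s t : ℝ) (p : Prop) [Decidable p] (hp : p → t ≤ s) :
    ‖if p then I * cexp (I * w * ((s : ℂ) - t)) else 0‖ₑ ≤ expKernel w.im s t := by
  split_ifs with h
  · rw [enorm_mul, Complex.enorm_I, one_mul, ← ofReal_norm, norm_cexp_I_mul_sub, expKernel,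
      abs_of_nonneg (sub_nonneg.mpr (hp h))]
  · simp

lemma enorm_Tcomp₁_le (u F : ℝ → ℂ) (lam : ℂ) (x : ℝ) :
    ‖Tcomp₁ u lam F x‖ₑ ≤ ‖lam‖ₑ * ∫⁻ y, expKernel (lam ^ 2).im x y * ‖u y‖ₑ * ‖F y‖ₑ := by
  rw [Tcomp₁, enorm_mul, enorm_mul]
  simp only [Complex.enorm_I, one_mul]
  gcongr
  refine (enorm_integral_le_lintegral_enorm _).trans (lintegral_mono fun y => ?_)
  rw [enorm_mul, enorm_mul, expKernel_comm]
  gcongr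
  rw [show -I * lam ^ 2 * ((x : ℂ) - y) = I * lam ^ 2 * ((y : ℂ) - x) by ring]
  exact enorm_ite_I_mul_cexp_le (lam ^ 2) y x (x < y) le_of_lt

lemma enorm_Tcomp₂_le (u F : ℝ → ℂ) (lam : ℂ) (x : ℝ) :
    ‖Tcomp₂ u lam F x‖ₑ ≤ ‖lam‖ₑ * ∫⁻ y, expKernel (lam ^ 2).im x y * ‖u y‖ₑ * ‖F y‖ₑ := by
  rw [Tcomp₂, enorm_mul, enorm_mul]
  simp only [Complex.enorm_I, one_mul]
  gcongr
  refine (enorm_integral_le_lintegral_enorm _).trans (lintegral_mono fun y => ?_)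
  rw [enorm_mul, enorm_mul, RCLike.enorm_conj]
  gcongr
  exact enorm_ite_I_mul_cexp_le (lam ^ 2) x y (y < x) le_of_lt

lemma aestronglyMeasurable_Tcomp₁ {u F : ℝ → ℂ} (lam : ℂ) (hu : AEStronglyMeasurable u)
    (hF : AEStronglyMeasurable F) : AEStronglyMeasurable (Tcomp₁ u lam F) := by
  have hjoint : AEStronglyMeasurable (fun p : ℝ × ℝ =>
      (if p.1 < p.2 then I * cexp (-I * lam ^ 2 * ((p.1 : ℂ) - p.2)) else 0) * u p.2 * F p.2)
      (volume.prod volume) := by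
    refine .mul (.mul ?_ hu.comp_snd) hF.comp_snd
    exact (Measurable.ite (measurableSet_lt measurable_fst measurable_snd) (by fun_prop)
      measurable_const).aestronglyMeasurable
  exact hjoint.integral_prod_right'.const_mul _

lemma aestronglyMeasurable_Tcomp₂ {u F : ℝ → ℂ} (lam : ℂ) (hu : AEStronglyMeasurable u)
    (hF : AEStronglyMeasurable F) : AEStronglyMeasurable (Tcomp₂ u lam F) := by
  have hjoint : AEStronglyMeasurable (fun p : ℝ × ℝ =>
      (if p.2 < p.1 then I * cexp (I * lam ^ 2 * ((p.1 : ℂ) - p.2)) else 0) *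
        starRingEnd ℂ (u p.2) * F p.2) (volume.prod volume) := by
    refine .mul (.mul ?_ (continuous_conj.comp_aestronglyMeasurable hu.comp_snd)) hF.comp_snd
    exact (Measurable.ite (measurableSet_lt measurable_snd measurable_fst) (by fun_prop)
      measurable_const).aestronglyMeasurable
  exact hjoint.integral_prod_right'.const_mul _

lemma ofReal_exp_mul_norm_sq_mul_norm_sq {E : Type*} [NormedAddCommGroup E] (a x y : ℝ)
    (z w : E) : ENNReal.ofReal (Real.exp (-2 * a * |x - y|) * ‖z‖ ^ 2 * ‖w‖ ^ 2) =
      expKernel a x y ^ 2 * ‖z‖ₑ ^ 2 * ‖w‖ₑ ^ 2 := by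
  rw [expKernel_sq, expKernel, ENNReal.ofReal_mul (by positivity),
    ENNReal.ofReal_mul (by positivity), ENNReal.ofReal_pow (norm_nonneg _),
    ENNReal.ofReal_pow (norm_nonneg _), ofReal_norm, ofReal_norm, neg_mul, neg_mul]

section WeightedL2

variable {E : Type*} [NormedAddCommGroup E] {f g : ℝ → E} {a : ℝ}

lemma lintegral_lintegral_expKernel_sq_mul_ne_top (ha : 0 ≤ a) (hf : MemLp f 2)
    (hg : MemLp g 2) : ∫⁻ x, ∫⁻ y, expKernel a x y ^ 2 * ‖f x‖ₑ ^ 2 * ‖g y‖ₑ ^ 2 ≠ ∞ := by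
  refine ne_top_of_le_ne_top (ENNReal.mul_ne_top hf.lintegral_enorm_sq_ne_top
    hg.lintegral_enorm_sq_ne_top) ?_
  rw [← lintegral_lintegral_mul (hf.1.enorm.pow_const 2) (hg.1.enorm.pow_const 2)]
  refine lintegral_mono fun x => lintegral_mono fun y => ?_
  rw [mul_assoc]
  exact mul_le_of_le_one_left zero_le (pow_le_one₀ zero_le (expKernel_le_one ha x y))

lemma integral_integral_exp_mul_norm_sq_mul_norm_sq (ha : 0 ≤ a) (hf : MemLp f 2)
    (hg : MemLp g 2) :
    ∫ x, ∫ y, Real.exp (-2 * a * |x - y|) * ‖f x‖ ^ 2 * ‖g y‖ ^ 2 =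
      (∫⁻ x, ∫⁻ y, expKernel a x y ^ 2 * ‖f x‖ₑ ^ 2 * ‖g y‖ₑ ^ 2).toReal := by
  have hmeas : AEStronglyMeasurable
      (uncurry fun x y => Real.exp (-2 * a * |x - y|) * ‖f x‖ ^ 2 * ‖g y‖ ^ 2)
      (volume.prod volume) :=
    ((Continuous.aestronglyMeasurable (by fun_prop)).mul (hf.1.norm.pow 2).comp_fst).mul
      (hg.1.norm.pow 2).comp_snd
  simp_rw [integral_integral_eq_toReal_lintegral_lintegral (fun x y => by positivity) hmeas
    (by simpa only [ofReal_exp_mul_norm_sq_mul_norm_sq] using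
      lintegral_lintegral_expKernel_sq_mul_ne_top ha hf hg),
    ofReal_exp_mul_norm_sq_mul_norm_sq]

end WeightedL2

lemma lintegral_enorm_sq_le_of_expKernel_bounds {a : ℝ} (ha : 0 < a) {c : ℝ≥0∞} (hc : c ≠ ∞)
    {f g h Φ T : ℝ → ℂ} (hf : AEStronglyMeasurable f) (hg : AEStronglyMeasurable g)
    (hh : AEStronglyMeasurable h) (hΦ : AEStronglyMeasurable Φ)
    (hΦle : ∀ y, ‖Φ y‖ₑ ≤ c * ∫⁻ z, expKernel a y z * ‖g z‖ₑ * ‖h z‖ₑ)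
    (hTle : ∀ x, ‖T x‖ₑ ≤ c * ∫⁻ y, expKernel a x y * ‖f y‖ₑ * ‖Φ y‖ₑ) :
    ∫⁻ x, ‖T x‖ₑ ^ 2 ≤ c ^ 4 * ENNReal.ofReal (2 / a) ^ 2 *
      (∫⁻ x, ∫⁻ y, expKernel a x y ^ 2 * ‖f x‖ₑ ^ 2 * ‖g y‖ₑ ^ 2) * ∫⁻ z, ‖h z‖ₑ ^ 2 := by
  have hrow (x : ℝ) : ∫⁻ y, expKernel a x y ≤ ENNReal.ofReal (2 / a) :=
    (lintegral_expKernel ha x).le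
  have hcol (y : ℝ) : ∫⁻ x, expKernel a x y ≤ ENNReal.ofReal (2 / a) := by
    simpa only [expKernel_comm] using hrow y
  rw [sq]
  exact lintegral_sq_le_of_iterated_kernel_bounds (measurable_expKernel a) hc hrow hcol
    hf.enorm hg.enorm hh.enorm hΦ.enorm hΦle hTle

theorem operator_norm_TT_bound :
    ∃ C : ℝ, 0 < C ∧
      ∀ f g : ℝ → ℂ, MemLp f 2 (volume : Measure ℝ) → MemLp g 2 (volume : Measure ℝ) →
      ∀ lam : ℂ, 0 < (lam ^ 2).im →
      ∀ h₁ h₂ : ℝ → ℂ, MemLp h₁ 2 (volume : Measure ℝ) → MemLp h₂ 2 (volume : Measure ℝ) →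
        (∫ x : ℝ, (‖Tcomp₁ f lam (Tcomp₂ g lam h₁) x‖ ^ 2 +
            ‖Tcomp₂ f lam (Tcomp₁ g lam h₂) x‖ ^ 2)) ≤
          C * (‖lam‖ ^ 4 / ((lam ^ 2).im) ^ 2) *
            (∫ x : ℝ, ∫ y : ℝ,
              Real.exp (-2 * (lam ^ 2).im * |x - y|) * ‖f x‖ ^ 2 * ‖g y‖ ^ 2) *
            ∫ x : ℝ, (‖h₁ x‖ ^ 2 + ‖h₂ x‖ ^ 2) := by
  refine ⟨4, by norm_num, fun f g hf hg lam ha h₁ h₂ hh₁ hh₂ => ?_⟩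
  have hφ₁ := aestronglyMeasurable_Tcomp₂ lam hg.1 hh₁.1
  have hφ₂ := aestronglyMeasurable_Tcomp₁ lam hg.1 hh₂.1
  have hT₁ := lintegral_enorm_sq_le_of_expKernel_bounds ha enorm_ne_top hf.1 hg.1 hh₁.1 hφ₁
    (enorm_Tcomp₂_le g h₁ lam) (enorm_Tcomp₁_le f _ lam)
  have hT₂ := lintegral_enorm_sq_le_of_expKernel_bounds ha enorm_ne_top hf.1 hg.1 hh₂.1 hφ₂
    (enorm_Tcomp₁_le g h₂ lam) (enorm_Tcomp₂_le f _ lam)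
  have hcoef : 4 * (‖lam‖ ^ 4 / (lam ^ 2).im ^ 2) =
      (‖lam‖ₑ ^ 4 * ENNReal.ofReal (2 / (lam ^ 2).im) ^ 2).toReal := by
    rw [ENNReal.toReal_mul, ENNReal.toReal_pow, ENNReal.toReal_pow, toReal_enorm,
      ENNReal.toReal_ofReal (by positivity)]
    field_simp
    ring
  have hD := lintegral_lintegral_expKernel_sq_mul_ne_top ha.le hf hg
  have hH₁ := hh₁.lintegral_enorm_sq_ne_top
  have hH₂ := hh₂.lintegral_enorm_sq_ne_top
  rw [integral_norm_sq_add_norm_sq (aestronglyMeasurable_Tcomp₁ lam hf.1 hφ₁)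
      (aestronglyMeasurable_Tcomp₂ lam hf.1 hφ₂), integral_norm_sq_add_norm_sq hh₁.1 hh₂.1,
    integral_integral_exp_mul_norm_sq_mul_norm_sq ha.le hf hg, hcoef, ← ENNReal.toReal_mul,
    ← ENNReal.toReal_mul]
  refine ENNReal.toReal_mono (by finiteness) ?_
  calc _ ≤ _ := add_le_add hT₁ hT₂
    _ = _ := by ring
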